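/- For any finite-dimensional gl_N-module W and any γ ∈ ℂ^N, the formulas t^r d_a (q^μ ⊗ w) = μ_a q^{μ+r} ⊗ w + Σ_{p=1}^N r_p q^{μ+r} ⊗ E^{pa} w (for r ∈ ℤ^N, μ ∈ γ + ℤ^N, a = 1,…,N) define a representation of the Lie algebra 𝒱_N on the space q^γ ℂ[q_1^{±1},…,q_N^{±1}] ⊗ W; that is, the operator assigned to [t^r d_a, t^m d_b] equals the commutator of the operators assigned to t^r d_a and t^m d_b. -/
import Mathlib


noncomputable section

/-- The space `q^γ ℂ[q_1^{±1},…,q_N^{±1}] ⊗ W`, with `q^{γ+μ} ⊗ w` represented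
as `Finsupp.single μ w`. -/
abbrev TM (N : ℕ) (W : Type*) [AddCommGroup W] [Module ℂ W] : Type _ :=
  (Fin N → ℤ) →₀ W

variable {N : ℕ} {W : Type*} [AddCommGroup W] [Module ℂ W]

/-- The action of `t^r d_a` on the tensor module `T(W,γ)`, where the `gl_N`-module
structure on `W` is encoded by the operators `ρ p a` representing the matrix units
`E^{pa}`. -/
noncomputable def tact (ρ : Fin N → Fin N → Module.End ℂ W) (γ : Fin N → ℂ)
    (r : Fin N → ℤ) (a : Fin N) : Module.End ℂ (TM N W) :=
  Finsupp.lsum ℂ fun μ => (Finsupp.lsingle (μ + r) : W →ₗ[ℂ] TM N W) ∘ₗ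
    ((γ a + (μ a : ℂ)) • (LinearMap.id : W →ₗ[ℂ] W) + ∑ p : Fin N, (r p : ℂ) • ρ p a)

/-- The family of operators `ρ p a` is a representation of `gl_N`, i.e. it respects the
commutation relations `[E^{pa}, E^{bc}] = δ_{ab} E^{pc} − δ_{cp} E^{ba}` of the matrix
units. -/
def IsGLRep (ρ : Fin N → Fin N → Module.End ℂ W) : Prop :=
  ∀ p a b c, ⁅ρ p a, ρ b c⁆ =
    (if a = b then ρ p c else 0) - (if c = p then ρ b a else 0)

lemma tact_single (ρ : Fin N → Fin N → Module.End ℂ W) (γ : Fin N → ℂ)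
    (r : Fin N → ℤ) (a : Fin N) (μ : Fin N → ℤ) (w : W) :
    tact ρ γ r a (Finsupp.single μ w) =
      Finsupp.single (μ + r) ((γ a + (μ a : ℂ)) • w + ∑ p : Fin N, (r p : ℂ) • ρ p a w) := by
  simp [tact]

theorem stmt0 {N : ℕ} {W : Type*} [AddCommGroup W] [Module ℂ W]
    (ρ : Fin N → Fin N → Module.End ℂ W) (hρ : IsGLRep ρ) (γ : Fin N → ℂ)
    (r m : Fin N → ℤ) (a b : Fin N) :
    (m a : ℂ) • tact ρ γ (r + m) b - (r b : ℂ) • tact ρ γ (r + m) a =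
      ⁅tact ρ γ r a, tact ρ γ m b⁆ := by
  have key : ∀ (x y : Fin N) (w : W), ρ x a (ρ y b w) = ρ y b (ρ x a w) +
      ((if a = y then ρ x b w else 0) - (if b = x then ρ y a w else 0)) := by
    intro x y w
    have h := LinearMap.ext_iff.mp (hρ x a y b) w
    simp only [Ring.lie_def, LinearMap.sub_apply, Module.End.mul_apply] at h
    rw [sub_eq_iff_eq_add'] at h
    rw [h]
    split_ifs <;> simp
  apply Finsupp.lhom_ext
  intro μ w
  simp only [LinearMap.sub_apply, LinearMap.smul_apply, Ring.lie_def, Module.End.mul_apply,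
    tact_single, Finsupp.smul_single, map_add, map_smul, map_sum]
  rw [show μ + m + r = μ + (r + m) from by abel, show μ + r + m = μ + (r + m) from by abel]
  simp only [← Finsupp.single_add, ← Finsupp.single_sub, Finsupp.smul_single]
  congr 1
  simp only [key, Pi.add_apply, Int.cast_add, smul_add, smul_sub, smul_smul, Finset.smul_sum,
    Finset.sum_add_distrib, Finset.sum_sub_distrib, smul_ite, smul_zero, Finset.sum_ite_eq,
    Finset.sum_ite_eq', Finset.mem_univ, if_true, add_smul, Finset.sum_ite_irrel,
    Finset.sum_const_zero, add_mul, mul_add, mul_comm, mul_left_comm]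
  rw [Finset.sum_comm]
  abel

end
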